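/- The positive presentation defining the monoid M'(Ẽ₈^{(1,1)}) is complemented: for every ordered pair of distinct generators (x, y) there is at most one defining relation one of whose sides begins with x while the other side begins with y, and no defining relation both of whose sides begin with the same generator; and symmetrically, for every ordered pair of distinct generators (x, y) there is at most one defining relation one of whose sides ends with x while the other side ends with y, and no defining relation both of whose sides end with the same generator. -/
import Mathlib


/-!
STATEMENT 15: The positive presentation defining the monoid `M'(Ẽ₈^{(1,1)})` is
complemented (right- and left-complemented).
-/

namespace EllipticE8Monoid

/-- Generators: `Sum.inl i` is `tᵢ` (`i ∈ ℤ`), `Sum.inr j` is `s_(j+1)`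
(so `Sum.inr 0` is `s₁`, ..., `Sum.inr 7` is `s₈`). -/
abbrev S : Type := ℤ ⊕ Fin 8

def t (i : ℤ) : S := Sum.inl i
def s (j : Fin 8) : S := Sum.inr j

/-- The pairs of (0-indexed) `s`-generators joined by an edge in the diagram,
i.e. satisfying a braid relation: (s₂,s₄), (s₃,s₅), (s₅,s₆), (s₆,s₇), (s₇,s₈). -/
def braidPairs : List (Fin 8 × Fin 8) := [(1, 3), (2, 4), (4, 5), (5, 6), (6, 7)]

/-- The defining relations of `M'(Ẽ₈^{(1,1)})` as (oriented) pairs of nonempty words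
in the free monoid on `S`: the braid relations `(tᵢsⱼtᵢ, sⱼtᵢsⱼ)` for `j ∈ {1,2,3}`,
the relations `(tᵢtᵢ₋₁, tⱼtⱼ₋₁)` for `i ≠ j`, the braid relations along the edges of the
`s`-part of the diagram, the commutation relations between the remaining pairs of
distinct `s`-generators, and the commutation of every `tᵢ` with `s₄, …, s₈`. -/
def R₀ : Set (List S × List S) :=
  { p | (∃ i : ℤ, ∃ j : Fin 8, j.val < 3 ∧ p = ([t i, s j, t i], [s j, t i, s j])) ∨
        (∃ i j : ℤ, i ≠ j ∧ p = ([t i, t (i - 1)], [t j, t (j - 1)])) ∨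
        (∃ q ∈ braidPairs, p = ([s q.1, s q.2, s q.1], [s q.2, s q.1, s q.2])) ∨
        (∃ i j : Fin 8, i ≠ j ∧ (i, j) ∉ braidPairs ∧ (j, i) ∉ braidPairs ∧
          p = ([s i, s j], [s j, s i])) ∨
        (∃ i : ℤ, ∃ j : Fin 8, 3 ≤ j.val ∧ p = ([t i, s j], [s j, t i])) }

/-- The defining relations viewed as unordered pairs: the symmetrisation of `R₀`. -/
def R : Set (List S × List S) := { p | p ∈ R₀ ∨ p.swap ∈ R₀ }

/-- The unique relation in `R` whose sides begin with `x` and `y` respectively. -/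
def fh : S → S → List S × List S
  | Sum.inl i, Sum.inl j => ([t i, t (i-1)], [t j, t (j-1)])
  | Sum.inl i, Sum.inr j =>
      if j.val < 3 then ([t i, s j, t i], [s j, t i, s j]) else ([t i, s j], [s j, t i])
  | Sum.inr j, Sum.inl i =>
      if j.val < 3 then ([s j, t i, s j], [t i, s j, t i]) else ([s j, t i], [t i, s j])
  | Sum.inr a, Sum.inr b =>
      if (a, b) ∈ braidPairs ∨ (b, a) ∈ braidPairs then ([s a, s b, s a], [s b, s a, s b])
      else ([s a, s b], [s b, s a])

/-- The unique relation in `R` whose sides end with `x` and `y` respectively. -/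
def fl : S → S → List S × List S
  | Sum.inl i, Sum.inl j => ([t (i+1), t i], [t (j+1), t j])
  | Sum.inl i, Sum.inr j =>
      if j.val < 3 then ([t i, s j, t i], [s j, t i, s j]) else ([s j, t i], [t i, s j])
  | Sum.inr j, Sum.inl i =>
      if j.val < 3 then ([s j, t i, s j], [t i, s j, t i]) else ([t i, s j], [s j, t i])
  | Sum.inr a, Sum.inr b =>
      if (a, b) ∈ braidPairs ∨ (b, a) ∈ braidPairs then ([s a, s b, s a], [s b, s a, s b])
      else ([s b, s a], [s a, s b])

lemma fh_swap (x y : S) : fh y x = (fh x y).swap := by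
  cases x <;> cases y <;> simp only [fh, or_comm] <;> (try split_ifs) <;> rfl

lemma fl_swap (x y : S) : fl y x = (fl x y).swap := by
  cases x <;> cases y <;> simp only [fl, or_comm] <;> (try split_ifs) <;> rfl

lemma braid_ne : ∀ r ∈ braidPairs, r.1 ≠ r.2 := by decide

lemma keyH₀ : ∀ p ∈ R₀, ∃ x y : S, x ≠ y ∧ p.1.head? = some x ∧ p.2.head? = some y ∧
    p = fh x y := by
  rintro p (⟨i, j, hj, rfl⟩ | ⟨i, j, hij, rfl⟩ | ⟨q, hq, rfl⟩ |
    ⟨i, j, hij, h1, h2, rfl⟩ | ⟨i, j, hj, rfl⟩)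
  · exact ⟨t i, s j, by simp [t, s], rfl, rfl, by simp [fh, t, s, hj]⟩
  · exact ⟨t i, t j, by simpa [t] using hij, rfl, rfl, rfl⟩
  · refine ⟨s q.1, s q.2, by simpa [s] using braid_ne q hq, rfl, rfl, ?_⟩
    simp only [fh, s]
    rw [if_pos (Or.inl hq)]
  · refine ⟨s i, s j, by simpa [s] using hij, rfl, rfl, ?_⟩
    simp only [fh, s]
    rw [if_neg (by tauto)]
  · refine ⟨t i, s j, by simp [t, s], rfl, rfl, ?_⟩
    simp only [fh, t, s]
    rw [if_neg (by omega)]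

lemma keyL₀ : ∀ p ∈ R₀, ∃ x y : S, x ≠ y ∧ p.1.getLast? = some x ∧ p.2.getLast? = some y ∧
    p = fl x y := by
  rintro p (⟨i, j, hj, rfl⟩ | ⟨i, j, hij, rfl⟩ | ⟨q, hq, rfl⟩ |
    ⟨i, j, hij, h1, h2, rfl⟩ | ⟨i, j, hj, rfl⟩)
  · exact ⟨t i, s j, by simp [t, s], rfl, rfl, by simp [fl, t, s, hj]⟩
  · refine ⟨t (i - 1), t (j - 1), by simp only [t, ne_eq, Sum.inl.injEq]; omega, rfl, rfl, ?_⟩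
    simp only [fl, t, sub_add_cancel]
  · refine ⟨s q.1, s q.2, by simpa [s] using braid_ne q hq, rfl, rfl, ?_⟩
    simp only [fl, s]
    rw [if_pos (Or.inl hq)]
  · refine ⟨s j, s i, by simpa [s] using hij.symm, rfl, rfl, ?_⟩
    simp only [fl, s]
    rw [if_neg (by tauto)]
  · refine ⟨s j, t i, by simp [t, s], rfl, rfl, ?_⟩
    simp only [fl, t, s]
    rw [if_neg (by omega)]

lemma keyH : ∀ p ∈ R, ∃ x y : S, x ≠ y ∧ p.1.head? = some x ∧ p.2.head? = some y ∧
    p = fh x y := by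
  rintro p (hp | hp)
  · exact keyH₀ p hp
  · obtain ⟨x, y, hxy, h1, h2, he⟩ := keyH₀ _ hp
    refine ⟨y, x, hxy.symm, h2, h1, ?_⟩
    rw [fh_swap, ← he, Prod.swap_swap]

lemma keyL : ∀ p ∈ R, ∃ x y : S, x ≠ y ∧ p.1.getLast? = some x ∧ p.2.getLast? = some y ∧
    p = fl x y := by
  rintro p (hp | hp)
  · exact keyL₀ p hp
  · obtain ⟨x, y, hxy, h1, h2, he⟩ := keyL₀ _ hp
    refine ⟨y, x, hxy.symm, h2, h1, ?_⟩
    rw [fl_swap, ← he, Prod.swap_swap]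

/-- The presentation is complemented: for every ordered pair of distinct generators
`(x, y)` there is at most one defining relation one of whose sides begins with `x` while
the other side begins with `y`, and no defining relation both of whose sides begin with
the same generator; and symmetrically for last letters. -/
theorem complemented :
    ((∀ x y : S, x ≠ y →
        {p ∈ R | p.1.head? = some x ∧ p.2.head? = some y}.Subsingleton) ∧
      ∀ p ∈ R, ¬∃ x : S, p.1.head? = some x ∧ p.2.head? = some x) ∧
    ((∀ x y : S, x ≠ y →
        {p ∈ R | p.1.getLast? = some x ∧ p.2.getLast? = some y}.Subsingleton) ∧
      ∀ p ∈ R, ¬∃ x : S, p.1.getLast? = some x ∧ p.2.getLast? = some x) := by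
  refine ⟨⟨?_, ?_⟩, ?_, ?_⟩
  · intro x y _ p ⟨hp, hp1, hp2⟩ q ⟨hq, hq1, hq2⟩
    obtain ⟨a, b, -, ha, hb, he⟩ := keyH p hp
    obtain ⟨c, d, -, hc, hd, he'⟩ := keyH q hq
    rw [hp1] at ha; rw [hp2] at hb; rw [hq1] at hc; rw [hq2] at hd
    rw [he, he', ← Option.some_inj.mp ha, ← Option.some_inj.mp hb,
      ← Option.some_inj.mp hc, ← Option.some_inj.mp hd]
  · rintro p hp ⟨x, h1, h2⟩
    obtain ⟨a, b, hab, ha, hb, -⟩ := keyH p hp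
    rw [h1] at ha; rw [h2] at hb
    exact hab ((Option.some_inj.mp ha).symm.trans (Option.some_inj.mp hb))
  · intro x y _ p ⟨hp, hp1, hp2⟩ q ⟨hq, hq1, hq2⟩
    obtain ⟨a, b, -, ha, hb, he⟩ := keyL p hp
    obtain ⟨c, d, -, hc, hd, he'⟩ := keyL q hq
    rw [hp1] at ha; rw [hp2] at hb; rw [hq1] at hc; rw [hq2] at hd
    rw [he, he', ← Option.some_inj.mp ha, ← Option.some_inj.mp hb,
      ← Option.some_inj.mp hc, ← Option.some_inj.mp hd]
  · rintro p hp ⟨x, h1, h2⟩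
    obtain ⟨a, b, hab, ha, hb, -⟩ := keyL p hp
    rw [h1] at ha; rw [h2] at hb
    exact hab ((Option.some_inj.mp ha).symm.trans (Option.some_inj.mp hb))

end EllipticE8Monoid
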